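/- arXiv:1511.02551 — 3 statements merged into one kernel-verified Lean document; each statement's English description precedes it below -/
import Mathlib

section
/- Let G = ⟨f₁,…,f_k⟩ be a Möbius semigroup with J_ker(G⁻¹) = ∅ and J(G⁻¹) ≠ ∅, let a ∈ ℂ̂, and let (i₁,i₂,…) ∈ Σ_k^+ be a sequence such that the empirical measures μ^a_{i₁,…,i_n} converge weakly, as n → ∞, to a Borel probability measure on ℂ̂ whose support equals J(G). Then J(G) ⊆ closure(⋃_{j=0}^∞ {z_{i₁,…,i_j}}) (where z with empty index string is a). If moreover a ∈ J(G), then J(G) = closure(⋃_{j=0}^∞ {z_{i₁,…,i_j}}). -/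
open MeasureTheory Topology Filter Set

noncomputable section

instance : MeasurableSpace (OnePoint ℂ) := borel _
instance : BorelSpace (OnePoint ℂ) := ⟨rfl⟩

/-- `f` is a Möbius map: a self-homeomorphism of the Riemann sphere extending
`z ↦ (az+b)/(cz+d)` with `ad - bc ≠ 0`. -/
def IsMobius (f : OnePoint ℂ → OnePoint ℂ) : Prop :=
  IsHomeomorph f ∧ ∃ a b c d : ℂ, a * d - b * c ≠ 0 ∧
    ∀ z : ℂ, c * z + d ≠ 0 → f (z : OnePoint ℂ) = (((a * z + b) / (c * z + d) : ℂ) : OnePoint ℂ)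

/-- The semigroup generated by `f 0, …, f (k-1)`: all finite compositions. -/
def genSemigroup {k : ℕ} (f : Fin k → OnePoint ℂ → OnePoint ℂ) :
    Set (OnePoint ℂ → OnePoint ℂ) :=
  { g | ∃ l : List (Fin k), l ≠ [] ∧ g = l.foldr (fun i h => f i ∘ h) id }

/-- The Fatou set of a family `G` of self-maps of the sphere: points having an open
neighborhood on which `G` is equicontinuous (w.r.t. the unique uniformity compatible
with the compact Hausdorff topology). -/
def fatouSet (G : Set (OnePoint ℂ → OnePoint ℂ)) : Set (OnePoint ℂ) :=
  letI : UniformSpace (OnePoint ℂ) := uniformSpaceOfCompactR1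
  { z | ∃ U : Set (OnePoint ℂ), IsOpen U ∧ z ∈ U ∧
      EquicontinuousOn (fun g : G => (g : OnePoint ℂ → OnePoint ℂ)) U }

/-- The Julia set: complement of the Fatou set. -/
def juliaSet (G : Set (OnePoint ℂ → OnePoint ℂ)) : Set (OnePoint ℂ) :=
  (fatouSet G)ᶜ

/-- The kernel Julia set `⋂_{g ∈ G} g⁻¹(J(G))`. -/
def kernelJulia (G : Set (OnePoint ℂ → OnePoint ℂ)) : Set (OnePoint ℂ) :=
  ⋂ g ∈ G, g ⁻¹' (juliaSet G)

/-- The exceptional set: points whose backward orbit `⋃_{g ∈ G} g⁻¹({z})` is finite. -/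
def excSet (G : Set (OnePoint ℂ → OnePoint ℂ)) : Set (OnePoint ℂ) :=
  { z | Set.Finite { w | ∃ g ∈ G, g w = z } }

/-- The random backward orbit: `bwdPt finv a ω 0 = a` and
`bwdPt finv a ω (n+1) = f_{ω n}⁻¹ (bwdPt finv a ω n)`, i.e. `z_{i₁,…,i_n}` where
`i_{m+1} = ω m`. -/
def bwdPt {k : ℕ} (finv : Fin k → OnePoint ℂ → OnePoint ℂ) (a : OnePoint ℂ)
    (ω : ℕ → Fin k) : ℕ → OnePoint ℂ
  | 0 => a
  | n + 1 => finv (ω n) (bwdPt finv a ω n)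

/-- `z_{i₁,…,i_n} = f_{i_n}⁻¹∘⋯∘f_{i₁}⁻¹(a)` for a finite word `w = (i₁,…,i_n)`. -/
def wordPt {k : ℕ} (finv : Fin k → OnePoint ℂ → OnePoint ℂ) (a : OnePoint ℂ)
    {n : ℕ} (w : Fin n → Fin k) : OnePoint ℂ :=
  (List.ofFn w).foldl (fun x i => finv i x) a

/-- The measure `μ_n^{a,b} = ∑_{i₁,…,i_n} b_{i₁}⋯b_{i_n} δ_{z_{i₁,…,i_n}}`. -/
def muN {k : ℕ} (finv : Fin k → OnePoint ℂ → OnePoint ℂ) (b : Fin k → NNReal)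
    (a : OnePoint ℂ) (n : ℕ) : Measure (OnePoint ℂ) :=
  ∑ w : Fin n → Fin k, (∏ j, (b (w j) : ENNReal)) • Measure.dirac (wordPt finv a w)

/-- Weak convergence of a sequence of Borel measures. -/
def WeakTendsto (ρ : ℕ → Measure (OnePoint ℂ)) (μ : Measure (OnePoint ℂ)) : Prop :=
  ∀ φ : OnePoint ℂ → ℝ, Continuous φ →
    Tendsto (fun n => ∫ x, φ x ∂(ρ n)) atTop (𝓝 (∫ x, φ x ∂μ))

/-- `ρ` is invariant under the adjoint `T_b^*` of the transition operator
`(Tφ)(z) = ∑_j b_j φ(f_j⁻¹ z)`, i.e. `∫ Tφ dρ = ∫ φ dρ` for all continuous `φ`. -/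
def TStarInvariant {k : ℕ} (finv : Fin k → OnePoint ℂ → OnePoint ℂ) (b : Fin k → NNReal)
    (ρ : Measure (OnePoint ℂ)) : Prop :=
  ∀ φ : OnePoint ℂ → ℝ, Continuous φ →
    ∫ z, (∑ j, (b j : ℝ) * φ (finv j z)) ∂ρ = ∫ z, φ z ∂ρ

/-- The (topological) support of a Borel measure: the smallest closed set of full
measure, i.e. the set of points all of whose open neighborhoods have positive measure. -/
def measSupport (μ : Measure (OnePoint ℂ)) : Set (OnePoint ℂ) :=
  { x | ∀ U : Set (OnePoint ℂ), IsOpen U → x ∈ U → 0 < μ U }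

/-- `P` is the Bernoulli product measure `P_b` on `Σ_k^+ = ∏_{n=1}^∞ {1,…,k}`. -/
def IsBernoulli {k : ℕ} (b : Fin k → NNReal) (P : Measure (ℕ → Fin k)) : Prop :=
  IsProbabilityMeasure P ∧ ∀ (m : ℕ) (j : Fin m → Fin k),
    P { ω | ∀ i : Fin m, ω i = j i } = ∏ i, (b (j i) : ENNReal)

/-- A minimal set of `G`: a nonempty compact set `L` with
`closure {g z : g ∈ G} = L` for every `z ∈ L`. -/
def IsMinimalSet (G : Set (OnePoint ℂ → OnePoint ℂ)) (L : Set (OnePoint ℂ)) : Prop :=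
  L.Nonempty ∧ IsCompact L ∧ ∀ z ∈ L, closure { w | ∃ g ∈ G, g z = w } = L

/-- `z₀` is an attracting fixed point of `g`: `g z₀ = z₀` and the iterates `g^n`
converge uniformly to the constant `z₀` on some open neighborhood of `z₀`. -/
def IsAttractingFixedPt (g : OnePoint ℂ → OnePoint ℂ) (z₀ : OnePoint ℂ) : Prop :=
  letI : UniformSpace (OnePoint ℂ) := uniformSpaceOfCompactR1
  g z₀ = z₀ ∧ ∃ U : Set (OnePoint ℂ), IsOpen U ∧ z₀ ∈ U ∧
    TendstoUniformlyOn (fun n => g^[n]) (fun _ => z₀) atTop U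
/-- The empirical measure `μ^a_{i₁,…,i_n} = (1/n) ∑_{j=1}^n δ_{z_{i₁,…,i_j}}`. -/
def empMeas {k : ℕ} (finv : Fin k → OnePoint ℂ → OnePoint ℂ) (a : OnePoint ℂ)
    (ω : ℕ → Fin k) (n : ℕ) : Measure (OnePoint ℂ) :=
  (n : ENNReal)⁻¹ • ∑ j ∈ Finset.range n, Measure.dirac (bwdPt finv a ω (j + 1))


/-!
Every empirical measure is carried by the closed set `C = closure {z_{i₁,…,i_j} : j ≥ 0}`, hence
so is its weak limit `μ`: an Urysohn function vanishing on `C` and positive at a point outside `C`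
integrates to zero against every `μ^a_{i₁,…,i_n}`, hence against `μ`. Thus `J(G) = supp μ ⊆ C`.
Conversely, `g ∘ f_j ∈ G` for `g ∈ G` and `f_j` is a homeomorphism, so `f_j` maps `F(G)` into
itself and `f_j⁻¹` maps `J(G)` into itself; for `a ∈ J(G)` the backward orbit stays in the closed
set `J(G)`.
-/

lemma foldr_comp_eq_comp {k : ℕ} (f : Fin k → OnePoint ℂ → OnePoint ℂ) (l : List (Fin k))
    (c : OnePoint ℂ → OnePoint ℂ) :
    l.foldr (fun i h => f i ∘ h) c = l.foldr (fun i h => f i ∘ h) id ∘ c := by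
  induction l with
  | nil => rfl
  | cons i l ih => simp only [List.foldr_cons, ih, Function.comp_assoc]

lemma comp_mem_genSemigroup {k : ℕ} {f : Fin k → OnePoint ℂ → OnePoint ℂ}
    {g : OnePoint ℂ → OnePoint ℂ} (hg : g ∈ genSemigroup f) (j : Fin k) :
    g ∘ f j ∈ genSemigroup f := by
  obtain ⟨l, -, rfl⟩ := hg
  refine ⟨l ++ [j], by simp, ?_⟩
  rw [List.foldr_append, List.foldr_cons, List.foldr_nil, Function.comp_id,
    foldr_comp_eq_comp f l (f j)]

lemma isOpen_fatouSet (G : Set (OnePoint ℂ → OnePoint ℂ)) : IsOpen (fatouSet G) :=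
  isOpen_iff_forall_mem_open.mpr fun _ ⟨U, hU, hzU, hequi⟩ =>
    ⟨U, fun _ hu => ⟨U, hU, hu, hequi⟩, hU, hzU⟩

lemma isClosed_juliaSet (G : Set (OnePoint ℂ → OnePoint ℂ)) : IsClosed (juliaSet G) :=
  (isOpen_fatouSet G).isClosed_compl

lemma mapsTo_fatouSet_of_comp_mem {G : Set (OnePoint ℂ → OnePoint ℂ)}
    (e : OnePoint ℂ ≃ₜ OnePoint ℂ) (hG : ∀ g ∈ G, g ∘ e ∈ G) :
    MapsTo e (fatouSet G) (fatouSet G) := by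
  let _ : UniformSpace (OnePoint ℂ) := uniformSpaceOfCompactR1
  rintro w ⟨U, hU, hwU, hequi⟩
  refine ⟨e '' U, e.isOpenMap U hU, mem_image_of_mem e hwU, ?_⟩
  rintro _ ⟨x, hxU, rfl⟩ V hV
  rw [← e.isEmbedding.map_nhdsWithin_eq U x, Filter.eventually_map]
  filter_upwards [hequi x hxU V hV] with x' hx' g
  exact hx' ⟨g ∘ e, hG g g.2⟩

lemma mapsTo_juliaSet_genSemigroup {k : ℕ} {f : Fin k → OnePoint ℂ → OnePoint ℂ} {j : Fin k}
    (hf : IsHomeomorph (f j)) {finv : OnePoint ℂ → OnePoint ℂ}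
    (hinv : Function.RightInverse finv (f j)) :
    MapsTo finv (juliaSet (genSemigroup f)) (juliaSet (genSemigroup f)) := by
  obtain ⟨e, he⟩ := isHomeomorph_iff_exists_homeomorph.mp hf
  intro z hz hfinv
  apply hz
  rw [← hinv z, ← he]
  exact mapsTo_fatouSet_of_comp_mem e (fun g hg => he ▸ comp_mem_genSemigroup hg j) hfinv

lemma bwdPt_mem_juliaSet {k : ℕ} {f finv : Fin k → OnePoint ℂ → OnePoint ℂ}
    (hmob : ∀ j, IsMobius (f j)) (hinv : ∀ j, Function.RightInverse (finv j) (f j))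
    {a : OnePoint ℂ} (ha : a ∈ juliaSet (genSemigroup f)) (ω : ℕ → Fin k) (n : ℕ) :
    bwdPt finv a ω n ∈ juliaSet (genSemigroup f) := by
  induction n with
  | zero => exact ha
  | succ n ih => exact mapsTo_juliaSet_genSemigroup (hmob (ω n)).1 (hinv (ω n)) ih

lemma measSupport_subset_of_integral_eq_zero {μ : Measure (OnePoint ℂ)} [IsFiniteMeasure μ]
    {C : Set (OnePoint ℂ)} (hC : IsClosed C)
    (h : ∀ φ : C(OnePoint ℂ, ℝ), EqOn φ 0 C → ∫ x, φ x ∂μ = 0) :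
    measSupport μ ⊆ C := by
  intro x hx
  by_contra hxC
  obtain ⟨φ, hφC, hφx, hφ01⟩ := exists_continuous_zero_one_of_isClosed hC isClosed_singleton
    (disjoint_singleton_right.mpr hxC)
  have hφ_ae : (fun z => φ z) =ᵐ[μ] 0 :=
    (integral_eq_zero_iff_of_nonneg (fun z => (hφ01 z).1)
      (φ.continuous.integrable_of_hasCompactSupport (.of_compactSpace _))).mp (h φ hφC)
  have hpos : 0 < μ (φ ⁻¹' Ioi 0) :=
    hx _ (isOpen_Ioi.preimage φ.continuous) (by simp [hφx rfl])
  exact hpos.ne' (measure_mono_null (fun z hz => ne_of_gt hz) hφ_ae)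

lemma measSupport_subset_of_weakTendsto {ρ : ℕ → Measure (OnePoint ℂ)}
    {μ : Measure (OnePoint ℂ)} [IsFiniteMeasure μ] {C : Set (OnePoint ℂ)} (hC : IsClosed C)
    (hρ : ∀ n, ∀ᵐ x ∂ρ n, x ∈ C) (hconv : WeakTendsto ρ μ) :
    measSupport μ ⊆ C := by
  refine measSupport_subset_of_integral_eq_zero hC fun φ hφ => ?_
  have hzero : ∀ n, ∫ x, φ x ∂ρ n = 0 := fun n =>
    integral_eq_zero_of_ae ((hρ n).mono fun x hx => hφ hx)
  exact tendsto_nhds_unique (hconv φ φ.continuous) (by simp only [hzero, tendsto_const_nhds])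

lemma ae_empMeas_mem {k : ℕ} (finv : Fin k → OnePoint ℂ → OnePoint ℂ) (a : OnePoint ℂ)
    (ω : ℕ → Fin k) {C : Set (OnePoint ℂ)}
    (horbit : ∀ j, bwdPt finv a ω j ∈ C) (n : ℕ) :
    ∀ᵐ x ∂empMeas finv a ω n, x ∈ C := by
  rw [ae_iff, empMeas, Measure.smul_apply, Measure.finsetSum_apply]
  simp [horbit]

theorem closure_backward_orbit_general {k : ℕ} (f finv : Fin k → OnePoint ℂ → OnePoint ℂ)
    (hmob : ∀ j, IsMobius (f j))
    (hinv : ∀ j, Function.LeftInverse (finv j) (f j) ∧ Function.RightInverse (finv j) (f j))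
    (a : OnePoint ℂ) (ω : ℕ → Fin k) (μ : Measure (OnePoint ℂ))
    (hμ : IsProbabilityMeasure μ)
    (hsupp : measSupport μ = juliaSet (genSemigroup f))
    (hconv : WeakTendsto (fun n => empMeas finv a ω n) μ) :
    juliaSet (genSemigroup f) ⊆ closure (⋃ j : ℕ, {bwdPt finv a ω j}) ∧
    (a ∈ juliaSet (genSemigroup f) →
      juliaSet (genSemigroup f) = closure (⋃ j : ℕ, {bwdPt finv a ω j})) := by
  rw [iUnion_singleton_eq_range]
  have hjulia_subset : juliaSet (genSemigroup f) ⊆ closure (range (bwdPt finv a ω)) :=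
    hsupp ▸ measSupport_subset_of_weakTendsto isClosed_closure
      (ae_empMeas_mem finv a ω fun j => subset_closure (mem_range_self j)) hconv
  refine ⟨hjulia_subset, fun ha => hjulia_subset.antisymm ?_⟩
  have horbit := bwdPt_mem_juliaSet hmob (fun j => (hinv j).2) ha ω
  exact closure_minimal (range_subset_iff.mpr horbit) (isClosed_juliaSet _)

/-- **Corollary (Closure of a random backward orbit contains/equals the Julia set).** -/
theorem closure_backward_orbit {k : ℕ} (f finv : Fin k → OnePoint ℂ → OnePoint ℂ)
    (hmob : ∀ j, IsMobius (f j))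
    (hinv : ∀ j, Function.LeftInverse (finv j) (f j) ∧ Function.RightInverse (finv j) (f j))
    (hker : kernelJulia (genSemigroup finv) = ∅)
    (hJ : juliaSet (genSemigroup finv) ≠ ∅)
    (a : OnePoint ℂ) (ω : ℕ → Fin k) (μ : Measure (OnePoint ℂ))
    (hμ : IsProbabilityMeasure μ)
    (hsupp : measSupport μ = juliaSet (genSemigroup f))
    (hconv : WeakTendsto (fun n => empMeas finv a ω n) μ) :
    juliaSet (genSemigroup f) ⊆ closure (⋃ j : ℕ, {bwdPt finv a ω j}) ∧
    (a ∈ juliaSet (genSemigroup f) →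
      juliaSet (genSemigroup f) = closure (⋃ j : ℕ, {bwdPt finv a ω j})) :=
  closure_backward_orbit_general f finv hmob hinv a ω μ hμ hsupp hconv
end
end

section
/- For each β ∈ ℂ \ {0}, let f(z) = β + 1/z and g(z) = −β + 1/z (extended as Möbius maps of ℂ̂), and let S_β = ⟨f, g⟩ and S_β' = ⟨f⁻¹, g⁻¹⟩. Then exactly one of the following holds: (i) J(S_β) ≠ J(S_β') and J_ker(S_β) = ∅ = J_ker(S_β'); or (ii) J(S_β) = J(S_β') and J_ker(S_β) = J(S_β) = J(S_β') = J_ker(S_β'). -/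
open MeasureTheory Topology Filter Set

noncomputable section

/-!
Every Möbius map `u` rescales the chordal metric `d` by a pointwise factor,
`d(u x, u y) = k(x) k(y) d(x, y)`, and hence `d(u x, u y) d(u z, u w) d(x, z) d(y, w) ≤ 8 d(x, y)`
for all `x, y, z, w`.

Let `z₀ ∈ J_ker(S)` and `v, w ∈ S` with `a = v z₀ ≠ b = w z₀`; then `u a, u b ∈ J(S)` for all
`u ∈ S`. Near `c ∈ J(S')` some `u' ∈ S'` pulls a pair `x, y` with tiny `d(x, y)` a definite distance
apart; applying the inequality to `u'` and `x, y, u a, u b`, where `u = u'⁻¹ ∈ S`, forces `u a` to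
be close to `x` or `u b` to be close to `y`. So `c ∈ J(S)`, i.e. `J_ker(S) ≠ ∅` implies
`J(S') ⊆ J(S)`.

The chordal isometry `σ(z) = -1/z` satisfies `σ f σ = f⁻¹` and `σ g σ = g⁻¹` (because `f ∘ σ` and
`g ∘ σ` are the involutions `z ↦ ±β - z`), so it conjugates `S` onto `S'` and exchanges their
kernel Julia sets. Hence a nonempty kernel Julia set forces `J(S) = J(S')`. Conversely, if
`J(S) = J(S')` then the common Fatou set is forward invariant under `S` and under `S' = S⁻¹`,
so `J_ker = J` for both semigroups.
-/

section Semigroup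

open Function

variable {k : ℕ} {F F' : Fin k → OnePoint ℂ → OnePoint ℂ}

lemma mem_genSemigroup (F : Fin k → OnePoint ℂ → OnePoint ℂ) (i : Fin k) :
    F i ∈ genSemigroup F :=
  ⟨[i], List.cons_ne_nil _ _, rfl⟩

lemma comp_mem_genSemigroup_s11 {u v : OnePoint ℂ → OnePoint ℂ} (hu : u ∈ genSemigroup F)
    (hv : v ∈ genSemigroup F) : u ∘ v ∈ genSemigroup F := by
  obtain ⟨l, hl, rfl⟩ := hu
  obtain ⟨m, -, rfl⟩ := hv
  refine ⟨l ++ m, by simp [hl], ?_⟩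
  clear hl
  induction l with
  | nil => rfl
  | cons i l ih => simp only [List.cons_append, List.foldr_cons, ← ih]; rfl

lemma genSemigroup_subset {M : Set (OnePoint ℂ → OnePoint ℂ)} (hF : ∀ i, F i ∈ M)
    (hM : ∀ u ∈ M, ∀ v ∈ M, u ∘ v ∈ M) : genSemigroup F ⊆ M := by
  rintro _ ⟨l, hl, rfl⟩
  induction l with
  | nil => exact absurd rfl hl
  | cons i l ih =>
    rcases eq_or_ne l [] with rfl | hl
    · exact hF i
    · exact hM _ (hF i) _ (ih hl)

lemma exists_leftInverse_mem_genSemigroup (h : ∀ i, LeftInverse (F' i) (F i)) :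
    ∀ u ∈ genSemigroup F, ∃ u' ∈ genSemigroup F', LeftInverse u' u :=
  genSemigroup_subset (fun i => ⟨F' i, mem_genSemigroup F' i, h i⟩)
    fun _ ⟨_, hu', hu⟩ _ ⟨_, hv', hv⟩ => ⟨_, comp_mem_genSemigroup_s11 hv' hu', hu.comp hv⟩

lemma exists_rightInverse_mem_genSemigroup (h : ∀ i, RightInverse (F' i) (F i)) :
    ∀ u ∈ genSemigroup F, ∃ u' ∈ genSemigroup F', RightInverse u' u :=
  genSemigroup_subset (fun i => ⟨F' i, mem_genSemigroup F' i, h i⟩)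
    fun _ ⟨_, hu', hu⟩ _ ⟨_, hv', hv⟩ => ⟨_, comp_mem_genSemigroup_s11 hv' hu', hu.comp hv⟩

lemma conj_mem_genSemigroup {θ : OnePoint ℂ → OnePoint ℂ} (hθ : Involutive θ)
    (h : ∀ i, θ ∘ F i ∘ θ = F' i) : ∀ u ∈ genSemigroup F, θ ∘ u ∘ θ ∈ genSemigroup F' :=
  genSemigroup_subset (M := {u | θ ∘ u ∘ θ ∈ genSemigroup F'})
    (fun i => by rw [mem_ofPred_eq, h i]; exact mem_genSemigroup F' i) fun u hu v hv => by
      have : θ ∘ (u ∘ v) ∘ θ = (θ ∘ u ∘ θ) ∘ (θ ∘ v ∘ θ) := by ext; simp [hθ _]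
      rw [mem_ofPred_eq, this]
      exact comp_mem_genSemigroup_s11 hu hv

lemma comp_comp_eq_of_leftInverse {α : Type*} {θ f f' : α → α} (hf' : LeftInverse f' f)
    (h : Involutive (f ∘ θ)) : θ ∘ f ∘ θ = f' :=
  funext fun z => by simpa using (hf' (θ (f (θ z)))).symm.trans (congrArg f' (h z))

end Semigroup

namespace RiemannSphere

open Function

/-! ### The chordal metric -/

/-- Inverse stereographic projection. -/
def toSphere : OnePoint ℂ → EuclideanSpace ℝ (Fin 3) :=
  OnePoint.rec (WithLp.toLp 2 ![0, 0, 1])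
    (fun z => WithLp.toLp 2 ![2 * z.re / (1 + ‖z‖ ^ 2), 2 * z.im / (1 + ‖z‖ ^ 2),
      (‖z‖ ^ 2 - 1) / (1 + ‖z‖ ^ 2)])

def chordalDist (z w : OnePoint ℂ) : ℝ := dist (toSphere z) (toSphere w)

@[simp] lemma toSphere_infty : toSphere OnePoint.infty = WithLp.toLp 2 ![0, 0, 1] := rfl

@[simp] lemma toSphere_coe (z : ℂ) : toSphere z =
    WithLp.toLp 2 ![2 * z.re / (1 + ‖z‖ ^ 2), 2 * z.im / (1 + ‖z‖ ^ 2),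
      (‖z‖ ^ 2 - 1) / (1 + ‖z‖ ^ 2)] := rfl

lemma chordalDist_nonneg (z w : OnePoint ℂ) : 0 ≤ chordalDist z w := dist_nonneg

lemma chordalDist_comm (z w : OnePoint ℂ) : chordalDist z w = chordalDist w z := dist_comm _ _

@[simp] lemma chordalDist_self (z : OnePoint ℂ) : chordalDist z z = 0 := dist_self _

lemma chordalDist_triangle (x y z : OnePoint ℂ) :
    chordalDist x z ≤ chordalDist x y + chordalDist y z :=
  dist_triangle _ _ _

lemma dist_sq_fin_three (p q : EuclideanSpace ℝ (Fin 3)) :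
    dist p q ^ 2 = (p 0 - q 0) ^ 2 + (p 1 - q 1) ^ 2 + (p 2 - q 2) ^ 2 := by
  rw [EuclideanSpace.dist_eq, Real.sq_sqrt (by positivity), Fin.sum_univ_three]
  simp [Real.dist_eq, sq_abs]

lemma chordalDist_coe_coe_sq (z w : ℂ) :
    chordalDist z w ^ 2 = 4 * ‖z - w‖ ^ 2 / ((1 + ‖z‖ ^ 2) * (1 + ‖w‖ ^ 2)) := by
  have hz : 1 + ‖z‖ ^ 2 ≠ 0 := by positivity
  have hw : 1 + ‖w‖ ^ 2 ≠ 0 := by positivity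
  simp only [chordalDist, dist_sq_fin_three, toSphere_coe, Matrix.cons_val]
  simp only [Complex.sq_norm, Complex.normSq_apply, Complex.sub_re, Complex.sub_im] at *
  field_simp
  ring

lemma chordalDist_coe_infty_sq (z : ℂ) :
    chordalDist z OnePoint.infty ^ 2 = 4 / (1 + ‖z‖ ^ 2) := by
  have hz : 1 + ‖z‖ ^ 2 ≠ 0 := by positivity
  simp only [chordalDist, dist_sq_fin_three, toSphere_coe, toSphere_infty, Matrix.cons_val]
  simp only [Complex.sq_norm, Complex.normSq_apply] at *
  field_simp
  ring

lemma norm_toSphere (z : OnePoint ℂ) : ‖toSphere z‖ = 1 := by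
  suffices ‖toSphere z‖ ^ 2 = 1 from (pow_eq_one_iff_of_nonneg (norm_nonneg _) two_ne_zero).1 this
  rw [← dist_zero_right, dist_sq_fin_three]
  induction z using OnePoint.rec with
  | infty => simp
  | coe z =>
    have hz : 1 + ‖z‖ ^ 2 ≠ 0 := by positivity
    simp only [toSphere_coe, Matrix.cons_val, PiLp.zero_apply, sub_zero]
    simp only [Complex.sq_norm, Complex.normSq_apply] at *
    field_simp
    ring

lemma chordalDist_le_two (z w : OnePoint ℂ) : chordalDist z w ≤ 2 := by
  have h := dist_le_norm_add_norm (toSphere z) (toSphere w)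
  rw [norm_toSphere, norm_toSphere] at h
  exact h.trans_eq one_add_one_eq_two

lemma toSphere_injective : Injective toSphere := by
  intro z w h
  have h0 : chordalDist z w ^ 2 = 0 := by simp [chordalDist, h]
  induction z using OnePoint.rec <;> induction w using OnePoint.rec
  · rfl
  · rw [chordalDist_comm, chordalDist_coe_infty_sq] at h0
    exact absurd h0 (by positivity)
  · rw [chordalDist_coe_infty_sq] at h0
    exact absurd h0 (by positivity)
  · rw [chordalDist_coe_coe_sq, div_eq_zero_iff] at h0
    have : ‖_ - _‖ = 0 := pow_eq_zero_iff two_ne_zero |>.1 <|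
      (mul_eq_zero.1 (h0.resolve_right (by positivity))).resolve_left four_ne_zero
    rw [norm_eq_zero, sub_eq_zero] at this
    rw [this]

lemma continuous_toSphere : Continuous toSphere := by
  rw [OnePoint.continuous_iff, coclosedCompact_eq_cocompact, tendsto_iff_dist_tendsto_zero]
  constructor
  · have hdist (z : ℂ) :
        dist (toSphere z) (toSphere OnePoint.infty) = √(4 / (1 + ‖z‖ ^ 2)) := by
      rw [← chordalDist_coe_infty_sq, Real.sqrt_sq (chordalDist_nonneg _ _)]; rfl
    simp_rw [hdist]
    have h : Tendsto (fun z : ℂ => 1 + ‖z‖ ^ 2) (cocompact ℂ) atTop :=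
      tendsto_atTop_add_const_left _ _
        ((tendsto_pow_atTop two_ne_zero).comp tendsto_norm_cocompact_atTop)
    simpa only [Real.sqrt_zero] using (tendsto_const_nhds (x := (4 : ℝ)).div_atTop h).sqrt
  · have hden (z : ℂ) : 1 + ‖z‖ ^ 2 ≠ 0 := by positivity
    refine (PiLp.continuous_toLp 2 _).comp (continuous_pi fun i => ?_)
    fin_cases i <;> exact Continuous.div (by fun_prop) (by fun_prop) hden

lemma isInducing_toSphere : IsInducing toSphere :=
  (continuous_toSphere.isClosedEmbedding toSphere_injective).isInducing

lemma hasBasis_nhds_chordalDist (x : OnePoint ℂ) :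
    (𝓝 x).HasBasis (fun ε : ℝ => 0 < ε) (fun ε => {y | chordalDist x y < ε}) := by
  rw [isInducing_toSphere.nhds_eq_comap]
  have h := (Metric.nhds_basis_ball (x := toSphere x)).comap toSphere
  simp only [Metric.ball, dist_comm, preimage_ofPred_eq] at h
  exact h

lemma hasBasis_uniformity_chordalDist :
    (@uniformity (OnePoint ℂ) uniformSpaceOfCompactR1).HasBasis (fun ε : ℝ => 0 < ε)
      (fun ε => {p | chordalDist p.1 p.2 < ε}) := by
  have h : uniformSpaceOfCompactR1 = UniformSpace.comap toSphere inferInstance :=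
    unique_uniformity_of_compact rfl isInducing_toSphere.eq_induced.symm
  rw [h, uniformity_comap]
  exact Metric.uniformity_basis_dist.comap _

lemma isOpen_setOf_chordalDist_lt (x : OnePoint ℂ) (ε : ℝ) :
    IsOpen {y | chordalDist x y < ε} :=
  isOpen_lt (continuous_const.dist continuous_toSphere) continuous_const

lemma continuous_of_chordalDist_eq {θ : OnePoint ℂ → OnePoint ℂ}
    (hθ : ∀ a b, chordalDist (θ a) (θ b) = chordalDist a b) : Continuous θ :=
  continuous_iff_continuousAt.2 fun x =>
    ((hasBasis_nhds_chordalDist x).tendsto_iff (hasBasis_nhds_chordalDist (θ x))).2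
      fun ε hε => ⟨ε, hε, fun y hy => by simpa [hθ] using hy⟩

/-! ### Fatou and Julia sets -/

variable {G H : Set (OnePoint ℂ → OnePoint ℂ)}

lemma mem_fatouSet_iff {z : OnePoint ℂ} :
    z ∈ fatouSet G ↔ ∃ U : Set (OnePoint ℂ), IsOpen U ∧ z ∈ U ∧
      ∀ x ∈ U, ∀ ε > 0, ∃ δ > 0, ∀ y ∈ U, chordalDist x y < δ →
        ∀ u ∈ G, chordalDist (u x) (u y) < ε := by
  refine exists_congr fun U => and_congr_right fun _ => and_congr_right fun _ =>
    forall₂_congr fun x _ => ?_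
  let : UniformSpace (OnePoint ℂ) := uniformSpaceOfCompactR1
  have h := (nhdsWithin_hasBasis (hasBasis_nhds_chordalDist x) U).equicontinuousWithinAt_iff
    hasBasis_uniformity_chordalDist (F := fun g : G => (g : OnePoint ℂ → OnePoint ℂ))
  refine h.trans ?_
  simp only [mem_inter_iff, mem_ofPred_eq, Subtype.forall, and_imp]
  exact forall₂_congr fun _ _ => exists_congr fun _ => and_congr_right fun _ =>
    forall_congr' fun _ => imp.swap

lemma isOpen_fatouSet (G : Set (OnePoint ℂ → OnePoint ℂ)) : IsOpen (fatouSet G) :=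
  isOpen_iff_forall_mem_open.2 fun _ ⟨U, hU, hzU, hequi⟩ =>
    ⟨U, fun _ hy => ⟨U, hU, hy, hequi⟩, hU, hzU⟩

lemma isClosed_juliaSet (G : Set (OnePoint ℂ → OnePoint ℂ)) : IsClosed (juliaSet G) :=
  (isOpen_fatouSet G).isClosed_compl

lemma mem_juliaSet_of_forall_exists_chordalDist_lt {c : OnePoint ℂ}
    (h : ∀ t > 0, ∃ j ∈ juliaSet G, chordalDist c j < t) : c ∈ juliaSet G := by
  rw [← (isClosed_juliaSet G).closure_eq,
    mem_closure_iff_nhds_basis (hasBasis_nhds_chordalDist c)]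
  exact h

lemma exists_stretched_pair_of_mem_juliaSet {c : OnePoint ℂ} (hc : c ∈ juliaSet G) {s : ℝ}
    (hs : 0 < s) : ∃ x, chordalDist c x < s ∧ ∃ ε > 0, ∀ δ > 0, ∃ y, chordalDist c y < s ∧
      chordalDist x y < δ ∧ ∃ u ∈ G, ε ≤ chordalDist (u x) (u y) := by
  by_contra! h
  refine hc (mem_fatouSet_iff.2 ⟨_, isOpen_setOf_chordalDist_lt c s, ?_, h⟩)
  simpa using hs

lemma mem_fatouSet_of_forall_eq_comp {φ θ : OnePoint ℂ → OnePoint ℂ} (hφ : Continuous φ)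
    (hθ : ∀ a b, chordalDist (θ a) (θ b) = chordalDist a b)
    (hHG : ∀ w ∈ H, ∃ w₀ ∈ G, w = θ ∘ w₀ ∘ φ) {z : OnePoint ℂ} (hz : φ z ∈ fatouSet G) :
    z ∈ fatouSet H := by
  obtain ⟨U, hU, hzU, hequi⟩ := mem_fatouSet_iff.1 hz
  refine mem_fatouSet_iff.2 ⟨φ ⁻¹' U, hU.preimage hφ, hzU, fun x hx ε hε => ?_⟩
  obtain ⟨δ, hδ, hδU⟩ := hequi (φ x) hx ε hε
  obtain ⟨η, hη, hηφ⟩ := ((hasBasis_nhds_chordalDist x).tendsto_iff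
    (hasBasis_nhds_chordalDist (φ x))).1 (hφ.tendsto x) δ hδ
  refine ⟨η, hη, fun y hy hxy w hw => ?_⟩
  obtain ⟨w₀, hw₀, rfl⟩ := hHG w hw
  simpa [hθ] using hδU (φ y) hy (hηφ y hxy) w₀ hw₀

lemma apply_mem_fatouSet {u : OnePoint ℂ → OnePoint ℂ} (hu : IsHomeomorph u)
    (hG : ∀ w ∈ G, w ∘ u ∈ G) {z : OnePoint ℂ} (hz : z ∈ fatouSet G) : u z ∈ fatouSet G := by
  let e := hu.homeomorph u
  refine mem_fatouSet_of_forall_eq_comp e.symm.continuous (θ := id) (fun _ _ => rfl)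
    (fun w hw => ⟨w ∘ u, hG w hw, funext fun x => congrArg w (e.apply_symm_apply x).symm⟩) ?_
  rwa [show e.symm (u z) = z from e.symm_apply_apply z]

lemma kernelJulia_subset_juliaSet {u : OnePoint ℂ → OnePoint ℂ} (hu : u ∈ G)
    (huh : IsHomeomorph u) (hG : ∀ w ∈ G, w ∘ u ∈ G) : kernelJulia G ⊆ juliaSet G :=
  fun _ hz hzF => mem_iInter₂.1 hz u hu (apply_mem_fatouSet huh hG hzF)

lemma apply_mem_juliaSet_of_conj {θ : OnePoint ℂ → OnePoint ℂ} (hθ : Involutive θ)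
    (hθd : ∀ a b, chordalDist (θ a) (θ b) = chordalDist a b) (hGH : ∀ u ∈ G, θ ∘ u ∘ θ ∈ H)
    {z : OnePoint ℂ} (hz : z ∈ juliaSet G) : θ z ∈ juliaSet H :=
  fun hθz => hz <| mem_fatouSet_of_forall_eq_comp (continuous_of_chordalDist_eq hθd) hθd
    (fun w hw => ⟨θ ∘ w ∘ θ, hGH w hw, by ext x; simp [hθ _]⟩) hθz

lemma apply_mem_kernelJulia_of_conj {θ : OnePoint ℂ → OnePoint ℂ} (hθ : Involutive θ)
    (hθd : ∀ a b, chordalDist (θ a) (θ b) = chordalDist a b) (hGH : ∀ u ∈ G, θ ∘ u ∘ θ ∈ H)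
    (hHG : ∀ u ∈ H, θ ∘ u ∘ θ ∈ G) {z : OnePoint ℂ} (hz : z ∈ kernelJulia G) :
    θ z ∈ kernelJulia H :=
  mem_iInter₂.2 fun u hu => by
    simpa [hθ _] using
      apply_mem_juliaSet_of_conj hθ hθd hGH (mem_iInter₂.1 hz (θ ∘ u ∘ θ) (hHG u hu))

/-! ### Maps rescaling the chordal metric -/

/-- Every Möbius map has this property, `k z ^ 2` being its chordal derivative at `z`; it is the
only feature of Möbius maps that the argument uses. -/
def HasChordalScaling (u : OnePoint ℂ → OnePoint ℂ) : Prop :=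
  ∃ k : OnePoint ℂ → ℝ, ∀ z w, chordalDist (u z) (u w) = k z * k w * chordalDist z w

lemma hasChordalScaling_of_chordalDist_eq {u : OnePoint ℂ → OnePoint ℂ}
    (hu : ∀ z w, chordalDist (u z) (u w) = chordalDist z w) : HasChordalScaling u :=
  ⟨1, fun z w => by simp [hu]⟩

lemma HasChordalScaling.comp {u v : OnePoint ℂ → OnePoint ℂ} (hu : HasChordalScaling u)
    (hv : HasChordalScaling v) : HasChordalScaling (u ∘ v) := by
  obtain ⟨k, hk⟩ := hu
  obtain ⟨l, hl⟩ := hv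
  exact ⟨fun z => k (v z) * l z, fun z w => by simp only [comp_apply, hk, hl]; ring⟩

lemma forall_mem_genSemigroup_hasChordalScaling {k : ℕ} {F : Fin k → OnePoint ℂ → OnePoint ℂ}
    (hF : ∀ i, HasChordalScaling (F i)) : ∀ u ∈ genSemigroup F, HasChordalScaling u :=
  genSemigroup_subset hF fun _ hu _ hv => HasChordalScaling.comp hu hv

lemma HasChordalScaling.chordalDist_mul_le {u : OnePoint ℂ → OnePoint ℂ}
    (hu : HasChordalScaling u) (x y z w : OnePoint ℂ) :
    chordalDist (u x) (u y) * chordalDist (u z) (u w) * (chordalDist x z * chordalDist y w) ≤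
      8 * chordalDist x y := by
  obtain ⟨k, hk⟩ := hu
  have h2 := chordalDist_le_two
  have h0 := chordalDist_nonneg
  calc _ = chordalDist x y * chordalDist z w *
        (chordalDist (u x) (u z) * chordalDist (u y) (u w)) := by simp only [hk]; ring
    _ ≤ chordalDist x y * 2 * (2 * 2) :=
        mul_le_mul (mul_le_mul_of_nonneg_left (h2 z w) (h0 x y))
          (mul_le_mul (h2 _ _) (h2 _ _) (h0 _ _) zero_le_two)
          (mul_nonneg (h0 _ _) (h0 _ _)) (mul_nonneg (h0 x y) zero_le_two)
    _ = 8 * chordalDist x y := by ring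

lemma juliaSet_subset_of_mem_kernelJulia (hG : ∀ u ∈ G, ∀ v ∈ G, u ∘ v ∈ G)
    (hscale : ∀ u' ∈ H, HasChordalScaling u') (hinv : ∀ u' ∈ H, ∃ u ∈ G, RightInverse u u')
    {z₀ : OnePoint ℂ} (hz₀ : z₀ ∈ kernelJulia G) {v w : OnePoint ℂ → OnePoint ℂ} (hv : v ∈ G)
    (hw : w ∈ G) (hvw : v z₀ ≠ w z₀) : juliaSet H ⊆ juliaSet G := by
  intro c hc
  refine mem_juliaSet_of_forall_exists_chordalDist_lt fun t ht => ?_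
  set a := v z₀
  set b := w z₀
  have hab : 0 < chordalDist a b := dist_pos.2 (toSphere_injective.ne hvw)
  obtain ⟨x, hcx, ε, hε, hstretch⟩ := exists_stretched_pair_of_mem_juliaSet hc (half_pos ht)
  -- `δ` is chosen so that `chordalDist_mul_le` rules out `u a` far from `x` and `u b` far from `y`
  obtain ⟨y, hcy, hxy, u', hu', hεu'⟩ :=
    hstretch (ε * chordalDist a b * (t / 2 * (t / 2)) / 8) (by positivity)
  obtain ⟨u, hu, hu'u⟩ := hinv u' hu'
  have hbound := (hscale u' hu').chordalDist_mul_le x y (u a) (u b)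
  rw [hu'u a, hu'u b] at hbound
  have hnear : chordalDist x (u a) < t / 2 ∨ chordalDist y (u b) < t / 2 := by
    by_contra! hfar
    have : ε * chordalDist a b * (t / 2 * (t / 2)) ≤
        chordalDist (u' x) (u' y) * chordalDist a b * (chordalDist x (u a) * chordalDist y (u b)) :=
      mul_le_mul (mul_le_mul_of_nonneg_right hεu' hab.le)
        (mul_le_mul hfar.1 hfar.2 (by positivity) (chordalDist_nonneg _ _)) (by positivity)
        (mul_nonneg (hε.le.trans hεu') hab.le)
    linarith
  have hJ : ∀ g ∈ G, u (g z₀) ∈ juliaSet G := fun g hg => mem_iInter₂.1 hz₀ (u ∘ g) (hG u hu g hg)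
  rcases hnear with h | h
  · exact ⟨u a, hJ v hv, by linarith [chordalDist_triangle c x (u a)]⟩
  · exact ⟨u b, hJ w hw, by linarith [chordalDist_triangle c y (u b)]⟩

section Semigroup

variable {k : ℕ} {F F' : Fin k → OnePoint ℂ → OnePoint ℂ}

lemma juliaSet_subset_of_kernelJulia_nonempty (hscale' : ∀ i, HasChordalScaling (F' i))
    (hinv : ∀ i, LeftInverse (F' i) (F i))
    (hsep : ∀ z, ∃ v ∈ genSemigroup F, ∃ w ∈ genSemigroup F, v z ≠ w z)
    (hker : (kernelJulia (genSemigroup F)).Nonempty) :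
    juliaSet (genSemigroup F') ⊆ juliaSet (genSemigroup F) :=
  let ⟨z, hz⟩ := hker
  let ⟨_, hv, _, hw, hvw⟩ := hsep z
  juliaSet_subset_of_mem_kernelJulia (fun _ hu _ hv => comp_mem_genSemigroup_s11 hu hv)
    (forall_mem_genSemigroup_hasChordalScaling hscale')
    (exists_rightInverse_mem_genSemigroup hinv) hz hv hw hvw

lemma kernelJulia_eq_juliaSet_of_juliaSet_eq [NeZero k] (hF : ∀ i, IsHomeomorph (F i))
    (hF' : ∀ i, IsHomeomorph (F' i)) (hinv : ∀ i, LeftInverse (F' i) (F i))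
    (hJ : juliaSet (genSemigroup F) = juliaSet (genSemigroup F')) :
    kernelJulia (genSemigroup F) = juliaSet (genSemigroup F) := by
  refine (kernelJulia_subset_juliaSet (mem_genSemigroup F 0) (hF 0)
    fun w hw => comp_mem_genSemigroup_s11 hw (mem_genSemigroup F 0)).antisymm
    fun z hz => mem_iInter₂.2 fun u hu huz => hz ?_
  have hfatou : fatouSet (genSemigroup F) = fatouSet (genSemigroup F') := compl_inj_iff.1 hJ
  obtain ⟨u', hu', hu'u⟩ := exists_leftInverse_mem_genSemigroup hinv u hu
  have hu'h : IsHomeomorph u' :=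
    genSemigroup_subset (M := {u | IsHomeomorph u}) hF' (fun _ hu _ hv => hu.comp hv) hu'
  rw [hfatou, ← hu'u z]
  exact apply_mem_fatouSet hu'h (fun w hw => comp_mem_genSemigroup_s11 hw hu') (hfatou ▸ huz)

theorem juliaSet_dichotomy_of_conj [NeZero k] {θ : OnePoint ℂ → OnePoint ℂ} (hθ : Involutive θ)
    (hθd : ∀ a b, chordalDist (θ a) (θ b) = chordalDist a b) (hF : ∀ i, IsHomeomorph (F i))
    (hscale : ∀ i, HasChordalScaling (F i))
    (hinv : ∀ i, LeftInverse (F' i) (F i) ∧ RightInverse (F' i) (F i))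
    (hconj : ∀ i, θ ∘ F i ∘ θ = F' i)
    (hsep : ∀ z, ∃ v ∈ genSemigroup F, ∃ w ∈ genSemigroup F, v z ≠ w z) :
    (juliaSet (genSemigroup F) ≠ juliaSet (genSemigroup F') ∧
      kernelJulia (genSemigroup F) = ∅ ∧ kernelJulia (genSemigroup F') = ∅) ∨
    (juliaSet (genSemigroup F) = juliaSet (genSemigroup F') ∧
      kernelJulia (genSemigroup F) = juliaSet (genSemigroup F) ∧
      kernelJulia (genSemigroup F') = juliaSet (genSemigroup F')) := by
  set S := genSemigroup F
  set S' := genSemigroup F'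
  have hconj' (i : Fin k) : θ ∘ F' i ∘ θ = F i := by rw [← hconj i]; ext; simp [hθ _]
  have hθS : ∀ u ∈ S, θ ∘ u ∘ θ ∈ S' := conj_mem_genSemigroup hθ hconj
  have hθS' : ∀ u ∈ S', θ ∘ u ∘ θ ∈ S := conj_mem_genSemigroup hθ hconj'
  have hθscale := hasChordalScaling_of_chordalDist_eq hθd
  have hscale' (i : Fin k) : HasChordalScaling (F' i) :=
    hconj i ▸ hθscale.comp ((hscale i).comp hθscale)
  have hsep' (z : OnePoint ℂ) : ∃ v ∈ S', ∃ w ∈ S', v z ≠ w z :=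
    let ⟨v, hv, w, hw, hvw⟩ := hsep (θ z)
    ⟨_, hθS v hv, _, hθS w hw, fun h => hvw (hθ.injective h)⟩
  have hker : (kernelJulia S).Nonempty ↔ (kernelJulia S').Nonempty :=
    ⟨fun ⟨z, hz⟩ => ⟨θ z, apply_mem_kernelJulia_of_conj hθ hθd hθS hθS' hz⟩,
      fun ⟨z, hz⟩ => ⟨θ z, apply_mem_kernelJulia_of_conj hθ hθd hθS' hθS hz⟩⟩
  have hJ_of_ker (h : (kernelJulia S).Nonempty) : juliaSet S = juliaSet S' :=
    (juliaSet_subset_of_kernelJulia_nonempty hscale (fun i => (hinv i).2) hsep' (hker.1 h)).antisymm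
      (juliaSet_subset_of_kernelJulia_nonempty hscale' (fun i => (hinv i).1) hsep h)
  have hθc := continuous_of_chordalDist_eq hθd
  have hF' (i : Fin k) : IsHomeomorph (F' i) := isHomeomorph_iff_exists_inverse.2
    ⟨hconj i ▸ hθc.comp ((hF i).continuous.comp hθc), F i, (hinv i).2, (hinv i).1,
      (hF i).continuous⟩
  by_cases hJ : juliaSet S = juliaSet S'
  · exact Or.inr ⟨hJ, kernelJulia_eq_juliaSet_of_juliaSet_eq hF hF' (fun i => (hinv i).1) hJ,
      kernelJulia_eq_juliaSet_of_juliaSet_eq hF' hF (fun i => (hinv i).2) hJ.symm⟩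
  · exact Or.inl ⟨hJ, not_nonempty_iff_eq_empty.1 (mt hJ_of_ker hJ),
      not_nonempty_iff_eq_empty.1 (mt (hJ_of_ker ∘ hker.2) hJ)⟩

end Semigroup

/-! ### The maps `z ↦ γ + 1/z` and `z ↦ -1/z` -/

def translate (γ : ℂ) : OnePoint ℂ → OnePoint ℂ :=
  OnePoint.rec OnePoint.infty fun z => ((z + γ : ℂ) : OnePoint ℂ)

def inversion : OnePoint ℂ → OnePoint ℂ :=
  OnePoint.rec ((0 : ℂ) : OnePoint ℂ) fun z =>
    if z = 0 then OnePoint.infty else ((z⁻¹ : ℂ) : OnePoint ℂ)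

def negation : OnePoint ℂ → OnePoint ℂ :=
  OnePoint.rec OnePoint.infty fun z => ((-z : ℂ) : OnePoint ℂ)

@[simp] lemma translate_infty (γ : ℂ) : translate γ OnePoint.infty = OnePoint.infty := rfl

@[simp] lemma translate_coe (γ z : ℂ) : translate γ z = ((z + γ : ℂ) : OnePoint ℂ) := rfl

@[simp] lemma inversion_infty : inversion OnePoint.infty = ((0 : ℂ) : OnePoint ℂ) := rfl

@[simp] lemma inversion_zero : inversion ((0 : ℂ) : OnePoint ℂ) = OnePoint.infty := if_pos rfl

@[simp] lemma inversion_coe {z : ℂ} (hz : z ≠ 0) : inversion z = ((z⁻¹ : ℂ) : OnePoint ℂ) :=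
  if_neg hz

@[simp] lemma negation_infty : negation OnePoint.infty = OnePoint.infty := rfl

@[simp] lemma negation_coe (z : ℂ) : negation z = ((-z : ℂ) : OnePoint ℂ) := rfl

lemma dist_toLp_mul_eq {n : ℕ} {s : Fin n → ℝ} (hs : ∀ i, |s i| = 1)
    (p q : EuclideanSpace ℝ (Fin n)) :
    dist (WithLp.toLp 2 fun i => s i * p i) (WithLp.toLp 2 fun i => s i * q i) = dist p q := by
  simp only [EuclideanSpace.dist_eq, Real.dist_eq, ← mul_sub, abs_mul, hs, one_mul]

lemma toSphere_inversion (z : OnePoint ℂ) :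
    toSphere (inversion z) = WithLp.toLp 2 fun i => ![1, -1, -1] i * toSphere z i := by
  ext i
  induction z using OnePoint.rec with
  | infty => fin_cases i <;> simp
  | coe z =>
    rcases eq_or_ne z 0 with rfl | hz
    · fin_cases i <;> simp
    have hz' : ‖z‖ ≠ 0 := norm_ne_zero_iff.2 hz
    fin_cases i <;>
      simp [inversion_coe hz, Complex.inv_re, Complex.inv_im, Complex.normSq_eq_norm_sq] <;>
      field_simp <;> ring

lemma toSphere_negation (z : OnePoint ℂ) :
    toSphere (negation z) = WithLp.toLp 2 fun i => ![-1, -1, 1] i * toSphere z i := by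
  ext i
  induction z using OnePoint.rec with
  | infty => fin_cases i <;> simp
  | coe z => fin_cases i <;> simp [neg_div]

lemma chordalDist_inversion (z w : OnePoint ℂ) :
    chordalDist (inversion z) (inversion w) = chordalDist z w := by
  simp only [chordalDist, toSphere_inversion]
  exact dist_toLp_mul_eq (fun i => by fin_cases i <;> simp) _ _

lemma chordalDist_negation (z w : OnePoint ℂ) :
    chordalDist (negation z) (negation w) = chordalDist z w := by
  simp only [chordalDist, toSphere_negation]
  exact dist_toLp_mul_eq (fun i => by fin_cases i <;> simp) _ _

lemma hasChordalScaling_translate (γ : ℂ) : HasChordalScaling (translate γ) := by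
  let k : OnePoint ℂ → ℝ := OnePoint.rec 1 fun z => √((1 + ‖z‖ ^ 2) / (1 + ‖z + γ‖ ^ 2))
  have hk0 (z : OnePoint ℂ) : 0 ≤ k z := by
    induction z using OnePoint.rec
    · exact zero_le_one
    · exact Real.sqrt_nonneg _
  have hkinf : k OnePoint.infty = 1 := rfl
  have hk (z : ℂ) : k z ^ 2 = (1 + ‖z‖ ^ 2) / (1 + ‖z + γ‖ ^ 2) := Real.sq_sqrt (by positivity)
  refine ⟨k, fun z w => (pow_left_inj₀ (chordalDist_nonneg _ _)
    (mul_nonneg (mul_nonneg (hk0 z) (hk0 w)) (chordalDist_nonneg z w)) two_ne_zero).1 ?_⟩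
  rw [mul_pow, mul_pow]
  induction z using OnePoint.rec <;> induction w using OnePoint.rec
  · simp
  · rw [translate_infty, translate_coe, chordalDist_comm, chordalDist_coe_infty_sq,
      chordalDist_comm, chordalDist_coe_infty_sq, hk, hkinf]
    field_simp
  · rw [translate_infty, translate_coe, chordalDist_coe_infty_sq, chordalDist_coe_infty_sq, hk,
      hkinf]
    field_simp
  · rw [translate_coe, translate_coe, chordalDist_coe_coe_sq, chordalDist_coe_coe_sq, hk, hk,
      add_sub_add_right_eq_sub]
    field_simp

lemma hasChordalScaling_translate_comp_inversion (γ : ℂ) :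
    HasChordalScaling (translate γ ∘ inversion) :=
  (hasChordalScaling_translate γ).comp (hasChordalScaling_of_chordalDist_eq chordalDist_inversion)

def negInv : OnePoint ℂ → OnePoint ℂ := negation ∘ inversion

lemma chordalDist_negInv (z w : OnePoint ℂ) :
    chordalDist (negInv z) (negInv w) = chordalDist z w := by
  simp only [negInv, comp_apply, chordalDist_negation, chordalDist_inversion]

lemma negInv_involutive : Involutive negInv := by
  intro z
  induction z using OnePoint.rec with
  | infty => simp [negInv]
  | coe z =>
    rcases eq_or_ne z 0 with rfl | hz
    · simp [negInv]
    · simp [negInv, hz]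

lemma eq_translate_comp_inversion {β : ℂ} {f : OnePoint ℂ → OnePoint ℂ}
    (hfz : ∀ z : ℂ, z ≠ 0 → f z = ((β + z⁻¹ : ℂ) : OnePoint ℂ))
    (hf0 : f ((0 : ℂ) : OnePoint ℂ) = OnePoint.infty) (hfi : f OnePoint.infty = (β : OnePoint ℂ)) :
    f = translate β ∘ inversion := by
  ext z
  induction z using OnePoint.rec with
  | infty => simp [hfi]
  | coe z =>
    rcases eq_or_ne z 0 with rfl | hz
    · simp [hf0]
    · simp [hfz z hz, hz, add_comm]

lemma translate_inversion_negInv_coe (γ z : ℂ) :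
    translate γ (inversion (negInv z)) = ((γ - z : ℂ) : OnePoint ℂ) := by
  rcases eq_or_ne z 0 with rfl | hz
  · simp [negInv]
  · simp [negInv, hz, sub_eq_neg_add]

lemma involutive_translate_comp_inversion_comp_negInv (γ : ℂ) :
    Involutive (translate γ ∘ inversion ∘ negInv) := by
  intro z
  induction z using OnePoint.rec with
  | infty => simp [negInv]
  | coe z => simp only [comp_apply, translate_inversion_negInv_coe, sub_sub_cancel]

lemma exists_mem_genSemigroup_apply_ne {β : ℂ} (hβ : β ≠ 0) (z : OnePoint ℂ) :
    ∃ v ∈ genSemigroup ![translate β ∘ inversion, translate (-β) ∘ inversion],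
      ∃ w ∈ genSemigroup ![translate β ∘ inversion, translate (-β) ∘ inversion], v z ≠ w z := by
  set S := genSemigroup ![translate β ∘ inversion, translate (-β) ∘ inversion]
  have hne : ∀ z ≠ ((0 : ℂ) : OnePoint ℂ),
      (translate β ∘ inversion) z ≠ (translate (-β) ∘ inversion) z := by
    intro z hz
    induction z using OnePoint.rec with
    | infty => simpa [self_ne_neg] using hβ
    | coe z =>
      have hz : z ≠ 0 := fun h => hz (congrArg _ h)
      simpa [hz, self_ne_neg] using hβ
  have hf : translate β ∘ inversion ∈ S := mem_genSemigroup _ 0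
  have hg : translate (-β) ∘ inversion ∈ S := mem_genSemigroup _ 1
  rcases eq_or_ne z ((0 : ℂ) : OnePoint ℂ) with rfl | hz
  · exact ⟨_, comp_mem_genSemigroup_s11 hf hf, _, comp_mem_genSemigroup_s11 hg hf, hne _ (by simp)⟩
  · exact ⟨_, hf, _, hg, hne z hz⟩

end RiemannSphere

open RiemannSphere

/-- **Theorem (Caruso semigroups dichotomy).** For `f(z) = β + 1/z`, `g(z) = -β + 1/z`,
`S_β = ⟨f, g⟩` and `S_β' = ⟨f⁻¹, g⁻¹⟩`, either the two Julia sets differ and both kernel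
Julia sets are empty, or they coincide and both kernel Julia sets equal the common Julia set. -/
theorem caruso_dichotomy (β : ℂ) (hβ : β ≠ 0)
    (f g f' g' : OnePoint ℂ → OnePoint ℂ)
    (hf : IsHomeomorph f) (hg : IsHomeomorph g)
    (hfz : ∀ z : ℂ, z ≠ 0 → f (z : OnePoint ℂ) = ((β + z⁻¹ : ℂ) : OnePoint ℂ))
    (hgz : ∀ z : ℂ, z ≠ 0 → g (z : OnePoint ℂ) = ((-β + z⁻¹ : ℂ) : OnePoint ℂ))
    (hf0 : f ((0 : ℂ) : OnePoint ℂ) = OnePoint.infty)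
    (hg0 : g ((0 : ℂ) : OnePoint ℂ) = OnePoint.infty)
    (hfi : f OnePoint.infty = ((β : ℂ) : OnePoint ℂ))
    (hgi : g OnePoint.infty = ((-β : ℂ) : OnePoint ℂ))
    (hf' : Function.LeftInverse f' f ∧ Function.RightInverse f' f)
    (hg' : Function.LeftInverse g' g ∧ Function.RightInverse g' g) :
    (juliaSet (genSemigroup ![f, g]) ≠ juliaSet (genSemigroup ![f', g']) ∧
      kernelJulia (genSemigroup ![f, g]) = ∅ ∧ kernelJulia (genSemigroup ![f', g']) = ∅) ∨
    (juliaSet (genSemigroup ![f, g]) = juliaSet (genSemigroup ![f', g']) ∧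
      kernelJulia (genSemigroup ![f, g]) = juliaSet (genSemigroup ![f, g]) ∧
      kernelJulia (genSemigroup ![f', g']) = juliaSet (genSemigroup ![f', g'])) := by
  obtain rfl := eq_translate_comp_inversion hfz hf0 hfi
  obtain rfl := eq_translate_comp_inversion hgz hg0 hgi
  exact juliaSet_dichotomy_of_conj negInv_involutive chordalDist_negInv
    (Fin.forall_fin_two.2 ⟨hf, hg⟩)
    (Fin.forall_fin_two.2 ⟨hasChordalScaling_translate_comp_inversion β,
      hasChordalScaling_translate_comp_inversion (-β)⟩)
    (Fin.forall_fin_two.2 ⟨hf', hg'⟩)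
    (Fin.forall_fin_two.2
      ⟨comp_comp_eq_of_leftInverse hf'.1 (involutive_translate_comp_inversion_comp_negInv β),
        comp_comp_eq_of_leftInverse hg'.1 (involutive_translate_comp_inversion_comp_negInv (-β))⟩)
    (exists_mem_genSemigroup_apply_ne hβ)
end
end

section
/- Let G = ⟨f₁,…,f_k⟩ be a finitely generated Möbius semigroup with J_ker(G) = ∅ and J(G) ≠ ∅, and let L be a minimal set of G. Then L ∩ F(G) ≠ ∅. -/
open MeasureTheory Topology Filter Set

noncomputable section

theorem exists_apply_mem_fatouSet_of_notMem_kernelJulia {G : Set (OnePoint ℂ → OnePoint ℂ)}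
    {z : OnePoint ℂ} (hz : z ∉ kernelJulia G) : ∃ g ∈ G, g z ∈ fatouSet G := by
  simpa [kernelJulia, juliaSet] using hz

theorem IsMinimalSet.apply_mem {G : Set (OnePoint ℂ → OnePoint ℂ)} {L : Set (OnePoint ℂ)}
    (hL : IsMinimalSet G L) {z : OnePoint ℂ} (hz : z ∈ L) {g : OnePoint ℂ → OnePoint ℂ}
    (hg : g ∈ G) : g z ∈ L :=
  hL.2.2 z hz ▸ subset_closure ⟨g, hg, rfl⟩

theorem minimal_set_meets_fatou_general {k : ℕ}
    (f : Fin k → OnePoint ℂ → OnePoint ℂ)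
    (hker : kernelJulia (genSemigroup f) = ∅)
    (L : Set (OnePoint ℂ)) (hL : IsMinimalSet (genSemigroup f) L) :
    (L ∩ fatouSet (genSemigroup f)).Nonempty := by
  obtain ⟨z, hz⟩ := hL.1
  obtain ⟨g, hg, hgz⟩ :=
    exists_apply_mem_fatouSet_of_notMem_kernelJulia (hker.symm ▸ notMem_empty z)
  exact ⟨g z, hL.apply_mem hz hg, hgz⟩

/-- **Claim (c): a minimal set of `G` meets the Fatou set.** -/
theorem minimal_set_meets_fatou {k : ℕ} (hk : 0 < k)
    (f : Fin k → OnePoint ℂ → OnePoint ℂ) (hmob : ∀ j, IsMobius (f j))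
    (hker : kernelJulia (genSemigroup f) = ∅)
    (hJ : juliaSet (genSemigroup f) ≠ ∅)
    (L : Set (OnePoint ℂ)) (hL : IsMinimalSet (genSemigroup f) L) :
    (L ∩ fatouSet (genSemigroup f)).Nonempty :=
  minimal_set_meets_fatou_general f hker L hL
end
end
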